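/- Let X = i, Y = i cos α + j sin α with cos α = 0 (i.e. Y = j), and t₁, t₂ ∈ ℝ with cos(t) > 0. Setting μ = arcsin(sin(2ε)cos(t)) and τ determined so that exp(ε·X)·exp(t·Y)·exp(ε·X) = exp(τ·Y)·exp(μ·X)·exp(τ·Y), one has, to first order in ε: τ = t/2 + o(ε) and μ = 2ε·cos(t) + o(ε). -/

import Mathlib

/-!
For a unit imaginary quaternion `u`, `exp (r • u) = cos r + sin r • u`. Since `i` and `j`
anticommute, `exp (a i) exp (b j) exp (a i) = cos b cos 2a + cos b sin 2a i + sin b j`, and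
symmetrically with `i` and `j` exchanged. The decomposition therefore amounts to
`sin μ = cos t sin 2ε` together with the planar identity
`cos μ • (cos 2τ, sin 2τ) = (cos t cos 2ε, sin t)`. With `μ = arcsin (sin 2ε cos t)`, `cos μ` is
exactly the length of that vector, so `2τ` can be taken to be its polar angle, for every `ε`.
At `ε = 0` the angle is `t`, and its derivative vanishes because `cos 2ε` is even; the
derivative of `μ` at `0` is `2 cos t`.
-/

open scoped Quaternion Topology

def qi : ℍ[ℝ] := ⟨0, 1, 0, 0⟩
def qj : ℍ[ℝ] := ⟨0, 0, 1, 0⟩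

open Real

lemma Quaternion.exp_real_smul_of_re_eq_zero_of_norm_eq_one {u : ℍ[ℝ]} (hre : u.re = 0)
    (hu : ‖u‖ = 1) (r : ℝ) : NormedSpace.exp (r • u) = ↑(cos r) + sin r • u := by
  rcases eq_or_ne r 0 with rfl | hr
  · simp
  rw [Quaternion.exp_of_re_eq_zero _ (by simp [hre]), norm_smul, hu, mul_one,
    Real.norm_eq_abs, cos_abs, smul_smul]
  rcases abs_choice r with h | h <;> simp [h, div_mul_cancel₀ _ hr]

lemma exp_smul_qi (r : ℝ) : NormedSpace.exp (r • qi) = ↑(cos r) + sin r • qi :=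
  Quaternion.exp_real_smul_of_re_eq_zero_of_norm_eq_one rfl
    (by rw [norm_eq_sqrt_real_inner, Quaternion.inner_self, Quaternion.normSq_def']; simp [qi]) r

lemma exp_smul_qj (r : ℝ) : NormedSpace.exp (r • qj) = ↑(cos r) + sin r • qj :=
  Quaternion.exp_real_smul_of_re_eq_zero_of_norm_eq_one rfl
    (by rw [norm_eq_sqrt_real_inner, Quaternion.inner_self, Quaternion.normSq_def']; simp [qj]) r

lemma exp_smul_qi_mul_exp_smul_qj_mul_exp_smul_qi (a b : ℝ) :
    NormedSpace.exp (a • qi) * NormedSpace.exp (b • qj) * NormedSpace.exp (a • qi) =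
      ⟨cos b * cos (2 * a), cos b * sin (2 * a), sin b, 0⟩ := by
  rw [exp_smul_qi, exp_smul_qj, cos_two_mul', sin_two_mul]
  ext <;> simp <;> simp [qi, qj]
  · ring
  · ring
  · linear_combination sin b * sin_sq_add_cos_sq a
  · ring

lemma exp_smul_qj_mul_exp_smul_qi_mul_exp_smul_qj (a b : ℝ) :
    NormedSpace.exp (a • qj) * NormedSpace.exp (b • qi) * NormedSpace.exp (a • qj) =
      ⟨cos b * cos (2 * a), sin b, cos b * sin (2 * a), 0⟩ := by
  rw [exp_smul_qi, exp_smul_qj, cos_two_mul', sin_two_mul]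
  ext <;> simp <;> simp [qi, qj]
  · ring
  · linear_combination sin b * sin_sq_add_cos_sq a
  · ring
  · ring

open Complex in
noncomputable def switchAngle (t ε : ℝ) : ℝ :=
  arg (↑(Real.cos t * Real.cos (2 * ε)) + ↑(Real.sin t) * I) / 2

lemma cos_arcsin_sin_mul_cos (a t : ℝ) :
    cos (arcsin (sin a * cos t)) = ‖(↑(cos t * cos a) + ↑(sin t) * Complex.I : ℂ)‖ := by
  rw [cos_arcsin, Complex.norm_add_mul_I]
  congr 1
  linear_combination (-cos t ^ 2) * sin_sq_add_cos_sq a - sin_sq_add_cos_sq t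

theorem exp_smul_qi_mul_exp_smul_qj_mul_exp_smul_qi_eq_switch (t ε : ℝ) :
    NormedSpace.exp (ε • qi) * NormedSpace.exp (t • qj) * NormedSpace.exp (ε • qi) =
      NormedSpace.exp (switchAngle t ε • qj) *
        NormedSpace.exp (arcsin (sin (2 * ε) * cos t) • qi) *
          NormedSpace.exp (switchAngle t ε • qj) := by
  have hx : |sin (2 * ε) * cos t| ≤ 1 := by
    rw [abs_mul]; exact mul_le_one₀ (abs_sin_le_one _) (abs_nonneg _) (abs_cos_le_one _)
  rw [exp_smul_qi_mul_exp_smul_qj_mul_exp_smul_qi, exp_smul_qj_mul_exp_smul_qi_mul_exp_smul_qj,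
    switchAngle, mul_div_cancel₀ _ two_ne_zero, cos_arcsin_sin_mul_cos, Complex.norm_mul_cos_arg,
    Complex.norm_mul_sin_arg, sin_arcsin (abs_le.mp hx).1 (abs_le.mp hx).2]
  simp only [Complex.add_re, Complex.add_im, Complex.ofReal_re, Complex.ofReal_im,
    Complex.re_ofReal_mul, Complex.im_ofReal_mul, Complex.I_re, Complex.I_im, mul_zero, add_zero,
    zero_add, mul_one, mul_comm (sin (2 * ε))]
  rfl

lemma switchAngle_zero {t : ℝ} (ht : t ∈ Set.Ioc (-π) π) : switchAngle t 0 = t / 2 := by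
  simp [switchAngle, Complex.arg_cos_add_sin_mul_I ht]

open Complex in
lemma hasDerivAt_switchAngle {t : ℝ} (ht : t ∈ Set.Ioo (-π) π) :
    HasDerivAt (switchAngle t) 0 0 := by
  have hz : HasDerivAt
      (fun ε : ℝ => (↑(Real.cos t * Real.cos (2 * ε)) + ↑(Real.sin t) * I : ℂ)) 0 0 := by
    have h := (((hasDerivAt_id (0 : ℝ)).const_mul 2).cos.const_mul (Real.cos t)).ofReal_comp
    simpa using h.add_const (↑(Real.sin t) * I)
  have hmem : (↑(Real.cos t * Real.cos (2 * 0)) + ↑(Real.sin t) * I : ℂ) ∈ slitPlane := by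
    rw [mem_slitPlane_iff]
    rcases eq_or_ne t 0 with rfl | ht0
    · simp
    · right
      simp only [add_im, ofReal_im, im_ofReal_mul, I_im, mul_one, zero_add]
      exact (Real.sin_eq_zero_iff_of_lt_of_lt ht.1 ht.2).not.mpr ht0
  have h := (imCLM.hasFDerivAt.comp_hasDerivAt _ (hz.clog_real hmem)).div_const 2
  unfold switchAngle
  simpa [← log_im] using h

lemma hasDerivAt_arcsin_sin_two_mul_mul (c : ℝ) :
    HasDerivAt (fun ε => arcsin (sin (2 * ε) * c)) (2 * c) 0 := by
  have h := ((hasDerivAt_id (0 : ℝ)).const_mul 2).sin.mul_const c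
  simpa [Function.comp_def] using (hasDerivAt_arcsin (by simp) (by simp)).comp 0 h

lemma HasDerivAt.isLittleO_sub_sub_mul {f : ℝ → ℝ} {f' : ℝ} (h : HasDerivAt f f' 0) :
    (fun ε => f ε - f 0 - f' * ε) =o[𝓝 0] fun ε => ε := by
  simpa [mul_comm] using hasDerivAt_iff_isLittleO.mp h

open Asymptotics Filter in
/-- The `α = π/2` case of Proposition 2.5: with `X = i`, `Y = j`, `0 < t < π/2`, and
`μ(ε) = arcsin (sin 2ε · cos t)`, there is `τ(ε)` with
`exp(ε X) exp(t Y) exp(ε X) = exp(τ Y) exp(μ X) exp(τ Y)` for small `ε > 0`, and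
to first order `τ(ε) = t/2 + o(ε)` and `μ(ε) = 2ε cos t + o(ε)`. -/
theorem symmetric_switch_first_order (t : ℝ) (ht0 : 0 < t) (ht : t < Real.pi / 2) :
    let X : ℍ[ℝ] := qi
    let Y : ℍ[ℝ] := qj
    let μ : ℝ → ℝ := fun ε => Real.arcsin (Real.sin (2 * ε) * Real.cos t)
    ∃ τ : ℝ → ℝ,
      (∀ᶠ ε in 𝓝[>] (0 : ℝ),
        NormedSpace.exp (ε • X) * NormedSpace.exp (t • Y) * NormedSpace.exp (ε • X)
          = NormedSpace.exp (τ ε • Y) * NormedSpace.exp (μ ε • X) *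
              NormedSpace.exp (τ ε • Y)) ∧
      (fun ε => τ ε - t / 2) =o[𝓝[>] (0 : ℝ)] (fun ε => ε) ∧
      (fun ε => μ ε - 2 * ε * Real.cos t) =o[𝓝[>] (0 : ℝ)] (fun ε => ε) := by
  intro X Y μ
  have ht' : t ∈ Set.Ioo (-π) π := ⟨by linarith [pi_pos], by linarith [pi_pos]⟩
  refine ⟨switchAngle t, .of_forall (exp_smul_qi_mul_exp_smul_qj_mul_exp_smul_qi_eq_switch t),
    ?_, ?_⟩
  · simpa [switchAngle_zero (Set.Ioo_subset_Ioc_self ht')] using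
      (hasDerivAt_switchAngle ht').isLittleO_sub_sub_mul.mono nhdsWithin_le_nhds
  · simpa [μ, mul_right_comm (2 : ℝ) _ (cos t)] using
      (hasDerivAt_arcsin_sin_two_mul_mul (cos t)).isLittleO_sub_sub_mul.mono nhdsWithin_le_nhds
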